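/- Let (X,T) be a minimal weakly mixing topological dynamical system and let d ≥ 1 be an integer. Then Q^{[d]}(X) = X^{[d]}, and the action of the cube group G^{[d]} on X^{[d]} is minimal, i.e. the G^{[d]}-orbit of every point of X^{[d]} is dense in X^{[d]}. -/

import Mathlib

/-!
`faceAct T n w = (T^{n·ε} w_ε)_ε` is the action of `ℤ^d` by face transformations; it fixes the
coordinate `ε = 0`. By induction on `d`, the face orbit of every `w` is dense in the other
coordinates. For the step, split the `(d+1)`-cube into a bottom and a top `d`-cube. By compactness,
finitely many face moves `f ∈ F` suffice to bring any bottom cube into a given box. On the top cube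
one needs a single move `n₀` such that every `f + n₀` can be completed by a diagonal power `T^m`:
the cubes admitting such a completion form a dense open set, since the return times of a point to
an open set are syndetic (minimality) and the common return times of finitely many pairs of open
sets are thick (weak mixing). Finally, in dimension `d + 1` with `w` on both faces, the last face
transformation acts diagonally on the top face, so the orbit of `w` under `T^{[d]}` and the face
transformations is dense.
-/

open Set

/-- The group of self-homeomorphisms of a topological space,
with `(f * g) x = f (g x)`. -/
instance homeomorphGroup {X : Type*} [TopologicalSpace X] : Group (X ≃ₜ X) where
  mul f g := g.trans f
  one := Homeomorph.refl X
  inv := Homeomorph.symm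
  mul_assoc f g h := rfl
  one_mul f := by ext x; rfl
  mul_one f := by ext x; rfl
  inv_mul_cancel f := by ext x; exact f.symm_apply_apply x

/-- `n · ε = n₁ε₁ + ⋯ + n_dε_d`. -/
def nDot {d : ℕ} (n : Fin d → ℤ) (ε : Fin d → Bool) : ℤ :=
  ∑ i, if ε i then n i else 0

/-- The vertex `(0,…,0)` of the cube `{0,1}^d`. -/
def v0 (d : ℕ) : Fin d → Bool := fun _ => false

/-- A topological dynamical system `(X,T)` is minimal if every orbit is dense. -/
def IsMinimalTDS {X : Type*} [TopologicalSpace X] (T : X ≃ₜ X) : Prop :=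
  ∀ x : X, Dense (Set.range fun n : ℤ => (T ^ n) x)

/-- The dynamical parallelepiped `Q^{[d]}(X)`: the closure in `X^{[d]} = X^({0,1}^d)`
of the set of points `(T^{n·ε} x)_{ε ∈ {0,1}^d}`, `x ∈ X`, `n ∈ ℤ^d`. -/
def cubeQ {X : Type*} [TopologicalSpace X] (T : X ≃ₜ X) (d : ℕ) :
    Set ((Fin d → Bool) → X) :=
  closure {y | ∃ (x : X) (n : Fin d → ℤ), y = fun ε => (T ^ nDot n ε) x}

/-- The regionally proximal relation of order `k` (for `k = 0` this is all of `X × X`). -/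
def RP {X : Type*} [MetricSpace X] (T : X ≃ₜ X) (k : ℕ) : Set (X × X) :=
  {p | ∀ δ > 0, ∃ (x' y' : X) (n : Fin k → ℤ),
    dist p.1 x' < δ ∧ dist p.2 y' < δ ∧
    ∀ ε : Fin k → Bool, ε ≠ v0 k →
      dist ((T ^ nDot n ε) x') ((T ^ nDot n ε) y') < δ}

/-- A factor map between topological dynamical systems: a continuous surjection
intertwining the actions. -/
def IsFactorMap {X Z : Type*} [TopologicalSpace X] [TopologicalSpace Z]
    (T : X ≃ₜ X) (S : Z ≃ₜ Z) (π : X → Z) : Prop :=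
  Continuous π ∧ Function.Surjective π ∧ ∀ x, π (T x) = S (π x)

/-- The diagonal homeomorphism `T^{[d]} = T × ⋯ × T` of `X^{[d]}`. -/
def diagHomeo {X : Type*} [TopologicalSpace X] (T : X ≃ₜ X) (d : ℕ) :
    ((Fin d → Bool) → X) ≃ₜ ((Fin d → Bool) → X) :=
  Homeomorph.piCongrRight fun _ : Fin d → Bool => T

/-- `w` is a minimal point of the homeomorphism `S`. -/
def IsMinimalPoint {W : Type*} [TopologicalSpace W] (S : W ≃ₜ W) (w : W) : Prop :=
  ∀ y ∈ closure (Set.range fun n : ℤ => (S ^ n) w),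
    closure (Set.range fun n : ℤ => (S ^ n) y)
      = closure (Set.range fun n : ℤ => (S ^ n) w)

/-- The `j`-th face transformation `T_j^{[d]}` of `X^{[d]}`. -/
def faceHomeo {X : Type*} [TopologicalSpace X] {d : ℕ} (T : X ≃ₜ X) (j : Fin d) :
    ((Fin d → Bool) → X) ≃ₜ ((Fin d → Bool) → X) :=
  Homeomorph.piCongrRight fun ε : Fin d → Bool =>
    if ε j then T else Homeomorph.refl X

/-- The face group `F^{[d]}`: the group of homeomorphisms of `X^{[d]}`
generated by the face transformations. -/
def faceGroup {X : Type*} [TopologicalSpace X] (T : X ≃ₜ X) (d : ℕ) :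
    Subgroup (((Fin d → Bool) → X) ≃ₜ ((Fin d → Bool) → X)) :=
  Subgroup.closure (Set.range (faceHomeo (d := d) T))

/-- The orbit of a point under a group of homeomorphisms. -/
def groupOrbit {W : Type*} [TopologicalSpace W] (G : Subgroup (W ≃ₜ W)) (w : W) : Set W :=
  {y | ∃ g ∈ G, g w = y}

/-- The homeomorphism `id × T_*^{[d]}` of `X^{[d]}`, fixing the `(0,…,0)`-coordinate
and applying `T` to every other coordinate. -/
def idFaceHomeo {X : Type*} [TopologicalSpace X] (T : X ≃ₜ X) (d : ℕ) :
    ((Fin d → Bool) → X) ≃ₜ ((Fin d → Bool) → X) :=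
  Homeomorph.piCongrRight fun ε : Fin d → Bool =>
    if ε = v0 d then Homeomorph.refl X else T

/-- A system `(X,T)` is weakly mixing if `(X × X, T × T)` is topologically transitive. -/
def IsWeaklyMixing {X : Type*} [TopologicalSpace X] (T : X ≃ₜ X) : Prop :=
  ∀ U V : Set (X × X), IsOpen U → IsOpen V → U.Nonempty → V.Nonempty →
    ∃ n : ℤ, (U ∩ (fun p : X × X => ((T ^ n) p.1, (T ^ n) p.2)) ⁻¹' V).Nonempty

/-- The cube group `G^{[d]}`: generated by the face transformations together with the
diagonal homeomorphism `T^{[d]}`. -/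
def cubeGroup {X : Type*} [TopologicalSpace X] (T : X ≃ₜ X) (d : ℕ) :
    Subgroup (((Fin d → Bool) → X) ≃ₜ ((Fin d → Bool) → X)) :=
  Subgroup.closure (Set.range (faceHomeo (d := d) T) ∪ {diagHomeo T d})

open Function

section HomeomorphGroup

variable {X : Type*} [TopologicalSpace X]

theorem homeomorph_zpow_add_apply (T : X ≃ₜ X) (a b : ℤ) (x : X) :
    (T ^ (a + b)) x = (T ^ a) ((T ^ b) x) := by
  rw [zpow_add]; rfl

def piCongrRightHom (ι : Type*) : (ι → X ≃ₜ X) →* ((ι → X) ≃ₜ (ι → X)) where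
  toFun := Homeomorph.piCongrRight
  map_one' := rfl
  map_mul' _ _ := rfl

end HomeomorphGroup

section Cube

variable {d : ℕ}

theorem nDot_v0 (n : Fin d → ℤ) : nDot n (v0 d) = 0 := by
  simp [nDot, v0]

theorem nDot_add (n m : Fin d → ℤ) (ε : Fin d → Bool) :
    nDot (n + m) ε = nDot n ε + nDot m ε := by
  simp only [nDot, ← Finset.sum_add_distrib]
  congr with i
  split_ifs <;> simp

theorem nDot_single (j : Fin d) (ε : Fin d → Bool) :
    nDot (Pi.single j 1) ε = if ε j then 1 else 0 := by
  rw [nDot, Finset.sum_eq_single j (fun i _ hij => by simp [hij]) (by simp)]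
  simp

theorem nDot_snoc (n : Fin (d + 1) → ℤ) (ε : Fin d → Bool) (b : Bool) :
    nDot n (Fin.snoc ε b) = nDot (Fin.init n) ε + if b then n (Fin.last d) else 0 := by
  simp [nDot, Fin.sum_univ_castSucc, Fin.init]

theorem snoc_eq_v0_iff (ε : Fin d → Bool) (b : Bool) :
    (Fin.snoc ε b : Fin (d + 1) → Bool) = v0 (d + 1) ↔ ε = v0 d ∧ b = false := by
  simp [funext_iff, Fin.forall_fin_succ', v0]

variable {X : Type*} [TopologicalSpace X] (T : X ≃ₜ X)

/-- `faceAct T n = (T₁^{[d]})^{n₁} ⋯ (T_d^{[d]})^{n_d}`. -/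
def faceAct (n : Fin d → ℤ) : ((Fin d → Bool) → X) ≃ₜ ((Fin d → Bool) → X) :=
  piCongrRightHom _ fun ε => T ^ nDot n ε

theorem faceAct_apply (n : Fin d → ℤ) (y : (Fin d → Bool) → X) (ε : Fin d → Bool) :
    faceAct T n y ε = (T ^ nDot n ε) (y ε) := rfl

theorem faceAct_apply_v0 (n : Fin d → ℤ) (y : (Fin d → Bool) → X) :
    faceAct T n y (v0 d) = y (v0 d) := by
  rw [faceAct_apply, nDot_v0]; rfl

theorem faceAct_add (n m : Fin d → ℤ) : faceAct T (n + m) = faceAct T n * faceAct T m := by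
  simp only [faceAct, nDot_add, zpow_add, ← map_mul]
  rfl

theorem faceAct_add_apply (n m : Fin d → ℤ) (y : (Fin d → Bool) → X) :
    faceAct T (n + m) y = faceAct T n (faceAct T m y) := by
  rw [faceAct_add]; rfl

theorem faceAct_single (j : Fin d) : faceAct T (Pi.single j 1) = faceHomeo T j := by
  ext y ε
  rw [faceAct_apply, nDot_single]
  by_cases h : ε j <;> simp [faceHomeo, h]

theorem faceAct_update_v0 (n : Fin d → ℤ) (y : (Fin d → Bool) → X) (a : X) :
    faceAct T n (update y (v0 d) a) = update (faceAct T n y) (v0 d) a := by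
  ext ε
  rcases eq_or_ne ε (v0 d) with rfl | hε
  · simp only [faceAct_apply_v0, update_self]
  · simp only [faceAct_apply, update_of_ne hε]

theorem faceAct_snoc_apply (n : Fin (d + 1) → ℤ) (y : (Fin (d + 1) → Bool) → X)
    (ε : Fin d → Bool) (b : Bool) :
    faceAct T n y (Fin.snoc ε b) = (T ^ (if b then n (Fin.last d) else 0))
      (faceAct T (Fin.init n) (fun e => y (Fin.snoc e b)) ε) := by
  rw [faceAct_apply, faceAct_apply, nDot_snoc, add_comm, homeomorph_zpow_add_apply]

theorem diagHomeo_zpow_apply (k : ℤ) (y : (Fin d → Bool) → X) (ε : Fin d → Bool) :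
    (diagHomeo T d ^ k) y ε = (T ^ k) (y ε) := by
  rw [show diagHomeo T d = piCongrRightHom _ fun _ => T from rfl, ← map_zpow]
  rfl

theorem diagHomeo_mem_cubeGroup : diagHomeo T d ∈ cubeGroup T d :=
  Subgroup.subset_closure (Or.inr rfl)

theorem faceAct_mem_cubeGroup (n : Fin d → ℤ) : faceAct T n ∈ cubeGroup T d := by
  let φ : (Fin d → ℤ) →+ Additive (((Fin d → Bool) → X) ≃ₜ ((Fin d → Bool) → X)) :=
    AddMonoidHom.mk' (fun n => Additive.ofMul (faceAct T n)) fun n m => by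
      rw [faceAct_add]; rfl
  have hsingle (j : Fin d) : Pi.single j 1 ∈ (cubeGroup T d).toAddSubgroup.comap φ := by
    change faceAct T (Pi.single j 1) ∈ cubeGroup T d
    rw [faceAct_single]
    exact Subgroup.subset_closure (Or.inl ⟨j, rfl⟩)
  have hn : n ∈ (cubeGroup T d).toAddSubgroup.comap φ := by
    rw [pi_eq_sum_univ' n]
    exact AddSubgroup.sum_mem _ fun j _ => AddSubgroup.zsmul_mem _ (hsingle j) _
  exact hn

end Cube

section Recurrence

variable {X : Type*} [TopologicalSpace X] (T : X ≃ₜ X)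

def returnTimes (U V : Set X) : Set ℤ :=
  {n | (U ∩ ⇑(T ^ n) ⁻¹' V).Nonempty}

theorem returnTimes_inter_preimage_subset (t : ℤ) {U V U' V' : Set X} :
    returnTimes T (U ∩ ⇑(T ^ t) ⁻¹' U') (V ∩ ⇑(T ^ t) ⁻¹' V') ⊆
      returnTimes T U V ∩ returnTimes T U' V' := by
  rintro n ⟨x, ⟨hxU, hxU'⟩, hxV, hxV'⟩
  refine ⟨⟨x, hxU, hxV⟩, (T ^ t) x, hxU', ?_⟩
  rwa [mem_preimage, ← homeomorph_zpow_add_apply, add_comm, homeomorph_zpow_add_apply]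

variable {T}

theorem IsWeaklyMixing.returnTimes_nonempty (hwm : IsWeaklyMixing T) {U V : Set X}
    (hUo : IsOpen U) (hVo : IsOpen V) (hU : U.Nonempty) (hV : V.Nonempty) :
    (returnTimes T U V).Nonempty := by
  obtain ⟨n, ⟨x, y⟩, ⟨hxU, -⟩, hxV, -⟩ :=
    hwm _ _ (hUo.prod hUo) (hVo.prod hVo) (hU.prod hU) (hV.prod hV)
  exact ⟨n, x, hxU, hxV⟩

theorem IsWeaklyMixing.exists_mem_returnTimes_finset (hwm : IsWeaklyMixing T) {ι : Type*}
    (U V : ι → Set X) (hUo : ∀ i, IsOpen (U i)) (hVo : ∀ i, IsOpen (V i))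
    (hU : ∀ i, (U i).Nonempty) (hV : ∀ i, (V i).Nonempty) (s : Finset ι) {A B : Set X}
    (hAo : IsOpen A) (hBo : IsOpen B) (hA : A.Nonempty) (hB : B.Nonempty) :
    ∃ n ∈ returnTimes T A B, ∀ i ∈ s, n ∈ returnTimes T (U i) (V i) := by
  classical
  induction s using Finset.induction_on generalizing A B with
  | empty =>
    obtain ⟨n, hn⟩ := hwm.returnTimes_nonempty hAo hBo hA hB
    exact ⟨n, hn, by simp⟩
  | insert a s _ ih =>
    -- weak mixing makes `A ∩ T⁻ᵗ U a` and `B ∩ T⁻ᵗ V a` nonempty for some `t`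
    obtain ⟨t, ⟨x, y⟩, ⟨hxA, hyB⟩, hxU, hyV⟩ :=
      hwm _ _ (hAo.prod hBo) ((hUo a).prod (hVo a)) (hA.prod hB) ((hU a).prod (hV a))
    obtain ⟨n, hn, hs⟩ := ih (hAo.inter ((hUo a).preimage (T ^ t).continuous))
      (hBo.inter ((hVo a).preimage (T ^ t).continuous)) ⟨x, hxA, hxU⟩ ⟨y, hyB, hyV⟩
    obtain ⟨hAB, ha⟩ := returnTimes_inter_preimage_subset T t hn
    exact ⟨n, hAB, Finset.forall_mem_insert _ _ _ |>.2 ⟨ha, hs⟩⟩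

theorem IsWeaklyMixing.exists_forall_mem_returnTimes (hwm : IsWeaklyMixing T) {ι : Type*}
    [Finite ι] (U V : ι → Set X) (hUo : ∀ i, IsOpen (U i)) (hVo : ∀ i, IsOpen (V i))
    (hU : ∀ i, (U i).Nonempty) (hV : ∀ i, (V i).Nonempty) :
    ∃ n, ∀ i, n ∈ returnTimes T (U i) (V i) := by
  cases nonempty_fintype ι
  rcases isEmpty_or_nonempty ι with hι | ⟨⟨i₀⟩⟩
  · exact ⟨0, isEmptyElim⟩
  obtain ⟨n, -, hn⟩ := hwm.exists_mem_returnTimes_finset U V hUo hVo hU hV Finset.univ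
    (hUo i₀) (hVo i₀) (hU i₀) (hV i₀)
  exact ⟨n, fun i => hn i (Finset.mem_univ i)⟩

theorem IsWeaklyMixing.exists_forall_add_mem_returnTimes (hwm : IsWeaklyMixing T) {ι : Type*}
    [Finite ι] (U V : ι → Set X) (hUo : ∀ i, IsOpen (U i)) (hVo : ∀ i, IsOpen (V i))
    (hU : ∀ i, (U i).Nonempty) (hV : ∀ i, (V i).Nonempty) (B : Finset ℤ) :
    ∃ N, ∀ i, ∀ b ∈ B, b + N ∈ returnTimes T (U i) (V i) := by
  obtain ⟨N, hN⟩ := hwm.exists_forall_mem_returnTimes (ι := ι × B)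
    (fun p => U p.1) (fun p => ⇑(T ^ (p.2 : ℤ)) ⁻¹' V p.1)
    (fun p => hUo p.1) (fun p => (hVo p.1).preimage (T ^ (p.2 : ℤ)).continuous)
    (fun p => hU p.1) (fun p => (hV p.1).preimage (T ^ (p.2 : ℤ)).surjective)
  refine ⟨N, fun i b hb => ?_⟩
  obtain ⟨x, hxU, hxV⟩ := hN (i, ⟨b, hb⟩)
  exact ⟨x, hxU, by rwa [mem_preimage, homeomorph_zpow_add_apply]⟩

theorem IsMinimalTDS.exists_finset_forall_zpow_mem [CompactSpace X] (hmin : IsMinimalTDS T)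
    {V : Set X} (hVo : IsOpen V) (hV : V.Nonempty) :
    ∃ F : Finset ℤ, ∀ x, ∃ f ∈ F, (T ^ f) x ∈ V := by
  have hcov : univ ⊆ ⋃ n : ℤ, ⇑(T ^ n) ⁻¹' V := fun x _ => by
    obtain ⟨_, ⟨n, rfl⟩, hn⟩ := (hmin x).exists_mem_open hVo hV
    exact mem_iUnion.2 ⟨n, hn⟩
  obtain ⟨F, hF⟩ :=
    isCompact_univ.elim_finite_subcover _ (fun n => hVo.preimage (T ^ n).continuous) hcov
  exact ⟨F, fun x => by simpa using hF (mem_univ x)⟩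

end Recurrence

section BoxEntry

variable {X : Type*} [TopologicalSpace X] (T : X ≃ₜ X) {ι : Type*} [DecidableEq ι]

def boxEntrySet (i : ι) (c : X) (V : ι → Set X) : Set (ι → X) :=
  {y | ∃ m : ℤ, ∀ j, (T ^ m) (update y i c j) ∈ V j}

variable {T}

theorem isOpen_boxEntrySet [Finite ι] (i : ι) (c : X) {V : ι → Set X}
    (hVo : ∀ j, IsOpen (V j)) : IsOpen (boxEntrySet T i c V) := by
  simp only [boxEntrySet, ofPred_exists, ofPred_forall]
  exact isOpen_iUnion fun m => isOpen_iInter_of_finite fun j =>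
    (hVo j).preimage ((T ^ m).continuous.comp
      ((continuous_apply j).comp (continuous_id.update i continuous_const)))

theorem update_mem_boxEntrySet_iff (i : ι) (c a : X) (V : ι → Set X) (y : ι → X) :
    update y i a ∈ boxEntrySet T i c V ↔ y ∈ boxEntrySet T i c V := by
  simp [boxEntrySet, update_idem]

theorem mem_boxEntrySet_of_apply_eq {i : ι} {c : X} {V : ι → Set X} {y : ι → X}
    (hy : y ∈ boxEntrySet T i c V) (hyc : y i = c) : ∃ m : ℤ, ∀ j, (T ^ m) (y j) ∈ V j := by
  rwa [boxEntrySet, mem_ofPred_eq, ← hyc, update_eq_self] at hy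

theorem dense_boxEntrySet [CompactSpace X] [Finite ι] (hmin : IsMinimalTDS T)
    (hwm : IsWeaklyMixing T) (i : ι) (c : X) {V : ι → Set X} (hVo : ∀ j, IsOpen (V j))
    (hV : ∀ j, (V j).Nonempty) : Dense (boxEntrySet T i c V) := by
  rw [dense_iff_inter_open]
  rintro O hO ⟨p, hp⟩
  obtain ⟨u, hu, huO⟩ := isOpen_pi_iff'.1 hO p hp
  obtain ⟨F, hF⟩ := hmin.exists_finset_forall_zpow_mem (hVo i) (hV i)
  obtain ⟨N, hN⟩ := hwm.exists_forall_add_mem_returnTimes u V (fun j => (hu j).1) hVo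
    (fun j => ⟨p j, (hu j).2⟩) hV F
  -- syndetic meets thick: some `f + N` with `f ∈ F` is both a return time of `c` to `V i` and
  -- a common return time of all the pairs `(u j, V j)`
  obtain ⟨f, hfF, hf⟩ := hF ((T ^ N) c)
  choose q hqu hqV using fun j => hN j f hfF
  refine ⟨q, huO fun j _ => hqu j, f + N, fun j => ?_⟩
  rcases eq_or_ne j i with rfl | hj
  · rwa [update_self, homeomorph_zpow_add_apply]
  · rw [update_of_ne hj]
    exact hqV j

end BoxEntry

section FaceOrbits

variable {X : Type*} [TopologicalSpace X] (T : X ≃ₜ X)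

def HasDenseFaceOrbits (d : ℕ) : Prop :=
  ∀ (w : (Fin d → Bool) → X) (V : (Fin d → Bool) → Set X), (∀ ε, IsOpen (V ε)) →
    (∀ ε, (V ε).Nonempty) → ∃ n, faceAct T n w ∈ ({v0 d}ᶜ : Set _).pi V

variable {T} {d : ℕ}

theorem HasDenseFaceOrbits.exists_faceAct_mem (H : HasDenseFaceOrbits T d)
    (w : (Fin d → Bool) → X) {O : Set ((Fin d → Bool) → X)} (hO : IsOpen O) {p}
    (hp : p ∈ O) (hpw : p (v0 d) = w (v0 d)) : ∃ n, faceAct T n w ∈ O := by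
  obtain ⟨u, hu, huO⟩ := isOpen_pi_iff'.1 hO p hp
  obtain ⟨n, hn⟩ := H w u (fun ε => (hu ε).1) (fun ε => ⟨p ε, (hu ε).2⟩)
  refine ⟨n, huO fun ε _ => ?_⟩
  rcases eq_or_ne ε (v0 d) with rfl | hε
  · rw [faceAct_apply_v0, ← hpw]
    exact (hu _).2
  · exact hn ε hε

theorem HasDenseFaceOrbits.exists_finset [CompactSpace X] (H : HasDenseFaceOrbits T d)
    {V : (Fin d → Bool) → Set X} (hVo : ∀ ε, IsOpen (V ε)) (hV : ∀ ε, (V ε).Nonempty) :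
    ∃ F : Finset (Fin d → ℤ), ∀ y, ∃ f ∈ F, faceAct T f y ∈ ({v0 d}ᶜ : Set _).pi V := by
  have hcov : univ ⊆ ⋃ n, ⇑(faceAct T n) ⁻¹' ({v0 d}ᶜ : Set _).pi V :=
    fun y _ => mem_iUnion.2 (H y V hVo hV)
  obtain ⟨F, hF⟩ := isCompact_univ.elim_finite_subcover _ (fun n =>
    (isOpen_set_pi (toFinite _) fun ε _ => hVo ε).preimage (faceAct T n).continuous) hcov
  exact ⟨F, fun y => by simpa using hF (mem_univ y)⟩

theorem HasDenseFaceOrbits.exists_forall_mem_finset_exists_zpow_mem [CompactSpace X]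
    (hmin : IsMinimalTDS T) (hwm : IsWeaklyMixing T) (H : HasDenseFaceOrbits T d)
    (w : (Fin d → Bool) → X) {V : (Fin d → Bool) → Set X} (hVo : ∀ ε, IsOpen (V ε))
    (hV : ∀ ε, (V ε).Nonempty) (F : Finset (Fin d → ℤ)) :
    ∃ n₀, ∀ f ∈ F, ∃ m : ℤ, ∀ ε, (T ^ m) (faceAct T (f + n₀) w ε) ∈ V ε := by
  set D := boxEntrySet T (v0 d) (w (v0 d)) V
  set G := ⋂ f ∈ F, ⇑(faceAct T f) ⁻¹' D with hG
  have hDo : IsOpen D := isOpen_boxEntrySet _ _ hVo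
  have hDd : Dense D := dense_boxEntrySet hmin hwm _ _ hVo hV
  have hGo : IsOpen G := isOpen_biInter_finset fun f _ => hDo.preimage (faceAct T f).continuous
  have hGd : Dense G := by
    rw [hG, ← Finset.set_biInter_coe, ← sInter_image]
    exact (F.finite_toSet.image _).dense_sInter
      (forall_mem_image.2 fun f _ => hDo.preimage (faceAct T f).continuous)
      (forall_mem_image.2 fun f _ => hDd.preimage (faceAct T f).isOpenMap)
  have : Nonempty X := ⟨w (v0 d)⟩
  obtain ⟨g, hg⟩ := hGd.nonempty
  have hgw : update g (v0 d) (w (v0 d)) ∈ G := by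
    simp only [G, mem_iInter₂, mem_preimage, faceAct_update_v0, D,
      update_mem_boxEntrySet_iff] at hg ⊢
    exact hg
  obtain ⟨n₀, hn₀⟩ := H.exists_faceAct_mem w hGo hgw (update_self ..)
  refine ⟨n₀, fun f hf => ?_⟩
  rw [faceAct_add_apply]
  exact mem_boxEntrySet_of_apply_eq (mem_iInter₂.1 hn₀ f hf)
    (by rw [faceAct_apply_v0, faceAct_apply_v0])

theorem HasDenseFaceOrbits.succ [CompactSpace X] (hmin : IsMinimalTDS T)
    (hwm : IsWeaklyMixing T) (H : HasDenseFaceOrbits T d) : HasDenseFaceOrbits T (d + 1) := by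
  intro w V hVo hV
  obtain ⟨F, hF⟩ := H.exists_finset (V := fun ε => V (Fin.snoc ε false))
    (fun _ => hVo _) (fun _ => hV _)
  obtain ⟨n₀, hn₀⟩ := H.exists_forall_mem_finset_exists_zpow_mem hmin hwm
    (fun ε => w (Fin.snoc ε true)) (fun _ => hVo _) (fun _ => hV _) F
  obtain ⟨f, hfF, hf⟩ := hF (faceAct T n₀ fun ε => w (Fin.snoc ε false))
  obtain ⟨m, hm⟩ := hn₀ f hfF
  refine ⟨Fin.snoc (f + n₀) m, fun ε hε => ?_⟩
  obtain ⟨ε, b, rfl⟩ : ∃ ε' b, Fin.snoc ε' b = ε := ⟨_, _, Fin.snoc_init_self ε⟩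
  rw [faceAct_snoc_apply, Fin.init_snoc, Fin.snoc_last]
  cases b
  · have hε' : ε ≠ v0 d := fun h => hε ((snoc_eq_v0_iff ε false).2 ⟨h, rfl⟩)
    simpa [faceAct_add_apply] using hf ε hε'
  · exact hm ε

theorem hasDenseFaceOrbits [CompactSpace X] (hmin : IsMinimalTDS T) (hwm : IsWeaklyMixing T) :
    ∀ d, HasDenseFaceOrbits T d
  | 0 => fun _ _ _ _ => ⟨0, fun ε hε => (hε (Subsingleton.elim ε (v0 0))).elim⟩
  | d + 1 => (hasDenseFaceOrbits hmin hwm d).succ hmin hwm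

theorem dense_range_diagHomeo_zpow_faceAct [CompactSpace X] (hmin : IsMinimalTDS T)
    (hwm : IsWeaklyMixing T) (w : (Fin d → Bool) → X) :
    Dense (range fun kn : ℤ × (Fin d → ℤ) => (diagHomeo T d ^ kn.1) (faceAct T kn.2 w)) := by
  rw [dense_iff_inter_open]
  rintro O hO ⟨p, hp⟩
  let top : ((Fin (d + 1) → Bool) → X) → (Fin d → Bool) → X := fun y ε => y (Fin.snoc ε true)
  obtain ⟨n, hn⟩ := (hasDenseFaceOrbits hmin hwm (d + 1)).exists_faceAct_mem
    (fun ε => w (Fin.init ε))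
    (hO.preimage (continuous_pi fun ε => continuous_apply _) : IsOpen (top ⁻¹' O))
    (p := fun ε => if ε (Fin.last d) then p (Fin.init ε) else w (Fin.init ε))
    (by simpa [top] using hp) (by simp [v0])
  refine ⟨_, ?_, (n (Fin.last d), Fin.init n), rfl⟩
  convert mem_preimage.1 hn using 1
  funext ε
  simp [diagHomeo_zpow_apply, faceAct_snoc_apply]

end FaceOrbits

theorem statement15_general {X : Type*} [MetricSpace X] [CompactSpace X]
    (T : X ≃ₜ X) (hmin : IsMinimalTDS T) (hwm : IsWeaklyMixing T)
    (d : ℕ) :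
    cubeQ T d = Set.univ ∧
      ∀ w : (Fin d → Bool) → X, Dense (groupOrbit (cubeGroup T d) w) := by
  have hdense := dense_range_diagHomeo_zpow_faceAct hmin hwm (d := d)
  refine ⟨eq_univ_of_forall fun y => closure_mono ?_ (hdense (fun _ => y (v0 d)) y),
    fun w => (hdense w).mono ?_⟩
  · rintro _ ⟨⟨k, n⟩, rfl⟩
    refine ⟨(T ^ k) (y (v0 d)), n, funext fun ε => ?_⟩
    dsimp only
    rw [diagHomeo_zpow_apply, faceAct_apply, ← homeomorph_zpow_add_apply,
      ← homeomorph_zpow_add_apply, add_comm]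
  · rintro _ ⟨⟨k, n⟩, rfl⟩
    exact ⟨_, mul_mem (zpow_mem (diagHomeo_mem_cubeGroup T) k) (faceAct_mem_cubeGroup T n), rfl⟩

/-- for a minimal weakly mixing system, `Q^{[d]}(X) = X^{[d]}` and the
action of the cube group `G^{[d]}` on `X^{[d]}` is minimal. -/
theorem statement15 {X : Type*} [MetricSpace X] [CompactSpace X]
    (T : X ≃ₜ X) (hmin : IsMinimalTDS T) (hwm : IsWeaklyMixing T)
    (d : ℕ) (hd : 1 ≤ d) :
    cubeQ T d = Set.univ ∧
      ∀ w : (Fin d → Bool) → X, Dense (groupOrbit (cubeGroup T d) w) :=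
  statement15_general T hmin hwm d
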